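/- arXiv:math/0405176 — 2 statements merged into one kernel-verified Lean document; each statement's English description precedes it below -/
import Mathlib

section
/- Assume q is not a root of unity. Then there exist a positive integer N and a polynomial b ∈ k[S,T] in two variables (depending only on C_0 and q) such that α_{r,m} = (q^m r)^{−N} · b(r, q^m) for all r ∈ k^× and all m ≥ 2. -/
open FreeAlgebra DirectSum

set_option maxSynthPendingDepth 3

namespace QSO

/-- Generators of `U_q(sl₂)`. -/
inductive GenU : Type | E | F | K | K'

/-- Generators of the quantized symplectic oscillator algebra. -/
inductive Gen : Type | E | F | K | K' | X | Y

variable (k : Type) [Field k] (q : k)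

/-- Defining relations of `U_q(sl₂)`. -/
inductive UqRel : FreeAlgebra k GenU → FreeAlgebra k GenU → Prop
  | KK' : UqRel (ι k GenU.K * ι k GenU.K') 1
  | K'K : UqRel (ι k GenU.K' * ι k GenU.K) 1
  | KE : UqRel (ι k GenU.K * ι k GenU.E) (algebraMap k (FreeAlgebra k GenU) (q ^ 2) * (ι k GenU.E * ι k GenU.K))
  | KF : UqRel (ι k GenU.K * ι k GenU.F) (algebraMap k (FreeAlgebra k GenU) (q⁻¹ ^ 2) * (ι k GenU.F * ι k GenU.K))
  | EF : UqRel (ι k GenU.E * ι k GenU.F - ι k GenU.F * ι k GenU.E)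
      (algebraMap k (FreeAlgebra k GenU) ((q - q⁻¹)⁻¹) * (ι k GenU.K - ι k GenU.K'))

/-- The quantized enveloping algebra `U_q(sl₂)`. -/
abbrev Uq := RingQuot (UqRel k q)

noncomputable def uE : Uq k q := RingQuot.mkAlgHom k (UqRel k q) (ι k GenU.E)
noncomputable def uF : Uq k q := RingQuot.mkAlgHom k (UqRel k q) (ι k GenU.F)
noncomputable def uK : Uq k q := RingQuot.mkAlgHom k (UqRel k q) (ι k GenU.K)
noncomputable def uK' : Uq k q := RingQuot.mkAlgHom k (UqRel k q) (ι k GenU.K')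

/-- The image in `U_q(sl₂)` of the chosen element `C₀`. -/
noncomputable def uC (C : FreeAlgebra k GenU) : Uq k q := RingQuot.mkAlgHom k (UqRel k q) C

/-- Defining relations of the quantized symplectic oscillator algebra of rank one;
`Cl` is a lift of the central element `C₀` to the free algebra. -/
inductive ARel (Cl : FreeAlgebra k Gen) : FreeAlgebra k Gen → FreeAlgebra k Gen → Prop
  | KK' : ARel Cl (ι k Gen.K * ι k Gen.K') 1
  | K'K : ARel Cl (ι k Gen.K' * ι k Gen.K) 1
  | KE : ARel Cl (ι k Gen.K * ι k Gen.E) (algebraMap k (FreeAlgebra k Gen) (q ^ 2) * (ι k Gen.E * ι k Gen.K))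
  | KF : ARel Cl (ι k Gen.K * ι k Gen.F) (algebraMap k (FreeAlgebra k Gen) (q⁻¹ ^ 2) * (ι k Gen.F * ι k Gen.K))
  | EF : ARel Cl (ι k Gen.E * ι k Gen.F - ι k Gen.F * ι k Gen.E)
      (algebraMap k (FreeAlgebra k Gen) ((q - q⁻¹)⁻¹) * (ι k Gen.K - ι k Gen.K'))
  | EX : ARel Cl (ι k Gen.E * ι k Gen.X) (algebraMap k (FreeAlgebra k Gen) q * (ι k Gen.X * ι k Gen.E))
  | EY : ARel Cl (ι k Gen.E * ι k Gen.Y) (ι k Gen.X + algebraMap k (FreeAlgebra k Gen) q⁻¹ * (ι k Gen.Y * ι k Gen.E))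
  | FX : ARel Cl (ι k Gen.F * ι k Gen.X) (ι k Gen.Y * ι k Gen.K' + ι k Gen.X * ι k Gen.F)
  | FY : ARel Cl (ι k Gen.F * ι k Gen.Y) (ι k Gen.Y * ι k Gen.F)
  | KX : ARel Cl (ι k Gen.K * ι k Gen.X) (algebraMap k (FreeAlgebra k Gen) q * (ι k Gen.X * ι k Gen.K))
  | KY : ARel Cl (ι k Gen.K * ι k Gen.Y) (algebraMap k (FreeAlgebra k Gen) q⁻¹ * (ι k Gen.Y * ι k Gen.K))
  | YX : ARel Cl (algebraMap k (FreeAlgebra k Gen) q * (ι k Gen.Y * ι k Gen.X) - ι k Gen.X * ι k Gen.Y) Cl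

/-- Inclusion of the free algebra on `E, F, K, K⁻¹` into the free algebra on all six
generators. -/
noncomputable def incl : FreeAlgebra k GenU →ₐ[k] FreeAlgebra k Gen :=
  FreeAlgebra.lift k (fun g => match g with
    | GenU.E => ι k Gen.E
    | GenU.F => ι k Gen.F
    | GenU.K => ι k Gen.K
    | GenU.K' => ι k Gen.K')

/-- The quantized symplectic oscillator algebra of rank one, for the central element
(represented by) `C`. -/
abbrev QSOAlg (C : FreeAlgebra k GenU) := RingQuot (ARel k q (incl k C))

variable (C : FreeAlgebra k GenU)

noncomputable def aE : QSOAlg k q C := RingQuot.mkAlgHom k (ARel k q (incl k C)) (ι k Gen.E)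
noncomputable def aF : QSOAlg k q C := RingQuot.mkAlgHom k (ARel k q (incl k C)) (ι k Gen.F)
noncomputable def aK : QSOAlg k q C := RingQuot.mkAlgHom k (ARel k q (incl k C)) (ι k Gen.K)
noncomputable def aK' : QSOAlg k q C := RingQuot.mkAlgHom k (ARel k q (incl k C)) (ι k Gen.K')
noncomputable def aX : QSOAlg k q C := RingQuot.mkAlgHom k (ARel k q (incl k C)) (ι k Gen.X)
noncomputable def aY : QSOAlg k q C := RingQuot.mkAlgHom k (ARel k q (incl k C)) (ι k Gen.Y)

/-- The image of `C₀` in the quantized symplectic oscillator algebra. -/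
noncomputable def aC : QSOAlg k q C := RingQuot.mkAlgHom k (ARel k q (incl k C)) (incl k C)

/-- `K^c` for an arbitrary integer `c`. -/
noncomputable def aKp (c : ℤ) : QSOAlg k q C := aK k q C ^ c.toNat * aK' k q C ^ (-c).toNat

/-- The canonical algebra map `U_q(sl₂) → A`. -/
noncomputable def φ : Uq k q →ₐ[k] QSOAlg k q C :=
  RingQuot.liftAlgHom k (s := UqRel k q)
    ⟨FreeAlgebra.lift k (fun g => match g with
        | GenU.E => aE k q C
        | GenU.F => aF k q C
        | GenU.K => aK k q C
        | GenU.K' => aK' k q C), by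
      intro x y h
      cases h with
      | KK' => simpa only [map_mul, map_one, AlgHom.commutes, FreeAlgebra.lift_ι_apply, aE, aF, aK, aK'] using
          RingQuot.mkAlgHom_rel k (ARel.KK' (k := k) (q := q) (Cl := incl k C))
      | K'K => simpa only [map_mul, map_one, AlgHom.commutes, FreeAlgebra.lift_ι_apply, aE, aF, aK, aK'] using
          RingQuot.mkAlgHom_rel k (ARel.K'K (k := k) (q := q) (Cl := incl k C))
      | KE => simpa only [map_mul, AlgHom.commutes, FreeAlgebra.lift_ι_apply, aE, aF, aK, aK'] using
          RingQuot.mkAlgHom_rel k (ARel.KE (k := k) (q := q) (Cl := incl k C))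
      | KF => simpa only [map_mul, AlgHom.commutes, FreeAlgebra.lift_ι_apply, aE, aF, aK, aK'] using
          RingQuot.mkAlgHom_rel k (ARel.KF (k := k) (q := q) (Cl := incl k C))
      | EF => simpa only [map_mul, map_sub, AlgHom.commutes, FreeAlgebra.lift_ι_apply, aE, aF, aK, aK'] using
          RingQuot.mkAlgHom_rel k (ARel.EF (k := k) (q := q) (Cl := incl k C))⟩

/-- The quantity `⟨a⟩ = (a - a⁻¹)/(q - q⁻¹)`. -/
noncomputable def br (a : k) : k := (a - a⁻¹) / (q - q⁻¹)

/-- The fundamental constant `α_{r,m}` (an empty sum, hence `0`, for `m ≤ 1`). -/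
noncomputable def alph (c₀ : k → k) (r : k) (m : ℕ) : k :=
  ∑ j ∈ Finset.range (m - 1), br k q (q ^ ((1 : ℤ) - (j : ℤ)) * r) * c₀ (q ^ (-(j : ℤ)) * r)

/-- `α_{r,m}` for an integer index `m` (zero for `m ≤ 1`). -/
noncomputable def alphZ (c₀ : k → k) (r : k) (m : ℤ) : k := alph k q c₀ r m.toNat

/-- The constant `d_{r,m}`. -/
noncomputable def dd (c₀ : k → k) (r : k) (m : ℕ) : k :=
  alph k q c₀ r m / (br k q (q ^ ((2 : ℤ) - (m : ℤ)) * r) * br k q (q ^ ((3 : ℤ) - (m : ℤ)) * r))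

/-- The left ideal defining the Verma module `Z(r)` of `A`. -/
noncomputable def vermaIdeal (r : k) : Submodule (QSOAlg k q C) (QSOAlg k q C) :=
  Submodule.span (QSOAlg k q C) {aE k q C, aX k q C, aK k q C - algebraMap k (QSOAlg k q C) r}

/-- The Verma module `Z(r)` over `A`. -/
abbrev Verma (r : k) := QSOAlg k q C ⧸ vermaIdeal k q C r

/-- The highest weight vector `v_r ∈ Z(r)`. -/
noncomputable def hwVec (r : k) : Verma k q C r := Submodule.Quotient.mk 1

/-- The left ideal defining the Verma module `Z_C(t)` of `U_q(sl₂)`. -/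
noncomputable def vermaIdealC (t : k) : Submodule (Uq k q) (Uq k q) :=
  Submodule.span (Uq k q) {uE k q, uK k q - algebraMap k (Uq k q) t}

/-- The Verma module `Z_C(t)` over `U_q(sl₂)`. -/
abbrev VermaC (t : k) := Uq k q ⧸ vermaIdealC k q t

/-- The highest weight vector of `Z_C(t)`. -/
noncomputable def hwVecC (t : k) : VermaC k q t := Submodule.Quotient.mk 1

/-- The structure vectors `v_{t_n}` in a standard cyclic module generated by `v`. -/
noncomputable def svec {M : Type} [AddCommGroup M] [Module (QSOAlg k q C) M]
    (v : M) (c₀ : k → k) (r : k) : ℕ → M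
  | 0 => v
  | 1 => aY k q C • v
  | (n + 2) => aY k q C • svec v c₀ r (n + 1) +
      algebraMap k (QSOAlg k q C) (dd k q c₀ r (n + 2)) • svec v c₀ r n

/-- The (unique) maximal proper submodule `W(r)` of the Verma module `Z(r)`. -/
noncomputable def radVerma (r : k) : Submodule (QSOAlg k q C) (Verma k q C r) :=
  sSup {N | N ≠ ⊤}

/-- The simple highest weight module `V(r) = Z(r)/W(r)`. -/
abbrev simpleQuot (r : k) := Verma k q C r ⧸ radVerma k q C r

/-- The (unique) maximal proper submodule of the `U_q(sl₂)`-Verma module `Z_C(t)`. -/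
noncomputable def radVermaC (t : k) : Submodule (Uq k q) (VermaC k q t) :=
  sSup {N | N ≠ ⊤}

/-- The simple highest weight `U_q(sl₂)`-module `V_C(t)`. -/
abbrev simpleQuotC (t : k) := VermaC k q t ⧸ radVermaC k q t

/-- `V(t)` is a composition factor (i.e. a subquotient) of `Z(s)`. -/
def IsCompFactor (t s : k) : Prop :=
  ∃ P Q : Submodule (QSOAlg k q C) (Verma k q C s), P ≤ Q ∧
    Nonempty ((↥Q ⧸ Submodule.comap Q.subtype P) ≃ₗ[QSOAlg k q C] simpleQuot k q C t)

/-- Adjacency: `t` and `s` are linked if `V(t)` is a composition factor of `Z(s)` or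
vice versa. -/
def Adj (t s : k) : Prop := IsCompFactor k q C t s ∨ IsCompFactor k q C s t

/-- The block `T(r)`: the connected component of `r` in the graph given by `Adj`. -/
def Tset (r : k) : Set k := {t | Relation.ReflTransGen (Adj k q C) r t}

/-- The PBW monomials `F^a Y^b K^c X^d E^e`. -/
noncomputable def pbwMono (p : ℕ × ℕ × ℤ × ℕ × ℕ) : QSOAlg k q C :=
  aF k q C ^ p.1 * aY k q C ^ p.2.1 * aKp k q C p.2.2.1 * aX k q C ^ p.2.2.2.1 *
    aE k q C ^ p.2.2.2.2



/-!
The central element `C₀` acts on the highest weight vector `v₀` of the Verma module of highest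
weight `t` by `c₀(t) = L(t)` for one Laurent polynomial `L`: realise all these Verma modules as
specialisations `T ↦ t` of a single Verma module over `k[T, T⁻¹]` with highest weight `T`.
For `t = qⁿ` the vector `F^{n+1} v₀` is a highest weight vector of weight `q^{-n-2}`, and `C₀`
commutes with `F^{n+1}`; hence `L(qⁿ) = L(q⁻² q⁻ⁿ)` for all `n`, and since `q` has infinite order
this forces `L(T) = L(q⁻² T⁻¹)`, in particular `L₋₁ = q⁻² L₁`.

So `α_{r,m} = ∑_{j ≤ m-2} D(q^{-j} r)` with `D(T) = ⟨qT⟩ L(T)`, whose constant coefficient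
`(q L₋₁ - q⁻¹ L₁)/(q - q⁻¹)` vanishes. Each monomial `D_s T^s` with `s ≠ 0` contributes the
geometric sum `D_s r^s ∑_j q^{-sj} = D_s r^s (q^s (q^m)^{-s} - 1)/(q^{-s} - 1)`, a Laurent
polynomial in `r` and `q^m`; clearing denominators with `(q^m r)^N` gives `b`.
-/

open LaurentPolynomial

section Laurent
variable {k : Type*} [Field k]

lemma eval₂_eq_sum {S : Type*} [CommSemiring S] (f : k →+* S) (x : Sˣ) (P : k[T;T⁻¹]) :
    eval₂ f x P = P.coeff.sum fun i a => f a * ↑(x ^ i) := by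
  induction P using LaurentPolynomial.induction_on' with
  | add P Q hP hQ =>
    rw [map_add, hP, hQ, AddMonoidAlgebra.coeff_add, Finsupp.sum_add_index'] <;> simp [add_mul]
  | C_mul_T n a =>
    rw [eval₂_C_mul_T, ← single_eq_C_mul_T, AddMonoidAlgebra.coeff_single,
      Finsupp.sum_single_index (by simp)]

noncomputable def laurentEvalAlgHom (x : kˣ) : k[T;T⁻¹] →ₐ[k] k :=
  { eval₂ (RingHom.id k) x with commutes' := fun r => by simp [← C_eq_algebraMap] }

lemma eq_zero_of_eval₂_eq_zero_of_infinite (P : k[T;T⁻¹]) {S : Set kˣ} (hS : S.Infinite)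
    (h : ∀ x ∈ S, eval₂ (RingHom.id k) x P = 0) : P = 0 := by
  obtain ⟨n, p, hp⟩ := exists_T_pow P
  have hroot : ∀ x ∈ S, p.IsRoot x := fun x hx => by
    simpa [hp, h x hx] using (eval₂_toLaurent (RingHom.id k) x p).symm
  have hp0 : p = 0 := p.eq_zero_of_infinite_isRoot <|
    (hS.image Units.val_injective.injOn).mono (by rintro _ ⟨x, hx, rfl⟩; exact hroot x hx)
  simpa [hp0, (isUnit_T (n : ℤ)).mul_left_eq_zero] using hp.symm

noncomputable def reflect (c : kˣ) (P : k[T;T⁻¹]) : k[T;T⁻¹] :=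
  P.coeff.sum fun i a => AddMonoidAlgebra.single (-i) (a * ↑(c ^ i))

lemma eval₂_reflect (c x : kˣ) (P : k[T;T⁻¹]) :
    eval₂ (RingHom.id k) x (reflect c P) = eval₂ (RingHom.id k) (c * x⁻¹) P := by
  rw [reflect, map_finsuppSum, eval₂_eq_sum]
  refine Finsupp.sum_congr fun i _ => ?_
  rw [single_eq_C_mul_T, eval₂_C_mul_T, mul_zpow, inv_zpow', RingHom.id_apply, RingHom.id_apply,
    Units.val_mul, mul_assoc]

lemma coeff_reflect (c : kˣ) (P : k[T;T⁻¹]) (i : ℤ) :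
    (reflect c P).coeff (-i) = P.coeff i * ↑(c ^ i) := by
  classical
  rw [reflect, AddMonoidAlgebra.coeff_finsuppSum, Finsupp.sum_apply, Finsupp.sum,
    Finset.sum_eq_single i]
  · rw [AddMonoidAlgebra.coeff_single, Finsupp.single_eq_same]
  · intro j _ hji
    rw [AddMonoidAlgebra.coeff_single, Finsupp.single_apply, if_neg (by omega)]
  · intro hi
    rw [Finsupp.notMem_support_iff.mp hi, zero_mul, AddMonoidAlgebra.single_zero,
      AddMonoidAlgebra.coeff_zero, Finsupp.coe_zero, Pi.zero_apply]

lemma coeff_neg_eq_of_eval₂_pow_eq (P : k[T;T⁻¹]) {u : kˣ} (hu : ∀ n : ℕ, n ≠ 0 → u ^ n ≠ 1)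
    (c : kˣ)
    (h : ∀ n : ℕ, eval₂ (RingHom.id k) (u ^ n) P = eval₂ (RingHom.id k) (c * (u ^ n)⁻¹) P)
    (i : ℤ) : P.coeff (-i) = P.coeff i * ↑(c ^ i) := by
  have hinj : Function.Injective fun n : ℕ => u ^ n :=
    injective_pow_iff_not_isOfFinOrder.mpr fun hfin => by
      obtain ⟨n, hn, hun⟩ := isOfFinOrder_iff_pow_eq_one.mp hfin
      exact hu n hn.ne' hun
  have hrefl : P - reflect c P = 0 :=
    eq_zero_of_eval₂_eq_zero_of_infinite _ (Set.infinite_range_of_injective hinj) <| by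
      rintro _ ⟨n, rfl⟩
      rw [map_sub, eval₂_reflect, h, sub_self]
  conv_lhs => rw [sub_eq_zero.mp hrefl]
  exact coeff_reflect c P i

end Laurent

section GeometricSum
variable {k : Type*} [Field k]

lemma zpow_ne_one_of_pow_ne_one {G : Type*} [DivisionMonoid G] {q : G}
    (hq : ∀ n : ℕ, n ≠ 0 → q ^ n ≠ 1) {s : ℤ} (hs : s ≠ 0) : q ^ s ≠ 1 := by
  obtain ⟨n, rfl | rfl⟩ := Int.eq_nat_or_neg s
  · simpa using hq n (by omega)
  · simpa using hq n (by omega)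

lemma sum_range_zpow_mul_zpow {q : k} (hq0 : q ≠ 0) (hq : ∀ n : ℕ, n ≠ 0 → q ^ n ≠ 1)
    (r : k) {s : ℤ} (hs : s ≠ 0) (n : ℕ) :
    ∑ j ∈ Finset.range n, (q ^ (-(j : ℤ)) * r) ^ s =
      (q ^ (-s) - 1)⁻¹ * (q ^ s * r ^ s * (q ^ (n + 1)) ^ (-s) - r ^ s) := by
  have hqs : q ^ (-s) ≠ 1 := zpow_ne_one_of_pow_ne_one hq (neg_ne_zero.mpr hs)
  have hterm : ∀ j : ℕ, (q ^ (-(j : ℤ)) * r) ^ s = r ^ s * (q ^ (-s)) ^ j := fun j => by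
    rw [mul_zpow, ← zpow_mul, ← zpow_natCast, ← zpow_mul]
    ring_nf
  have hpow : (q ^ (-s)) ^ n = q ^ s * (q ^ (n + 1)) ^ (-s) := by
    rw [← zpow_natCast, ← zpow_mul, ← zpow_natCast, ← zpow_mul, ← zpow_add₀ hq0]
    push_cast
    ring_nf
  simp only [hterm, ← Finset.mul_sum, geom_sum_eq hqs, hpow]
  field_simp [sub_ne_zero.mpr hqs]

noncomputable def shiftedMonomial (N : ℕ) (a b : ℤ) : MvPolynomial (Fin 2) k :=
  MvPolynomial.X 0 ^ (N + a).toNat * MvPolynomial.X 1 ^ (N + b).toNat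

lemma inv_mul_pow_mul_eval_shiftedMonomial {x y : k} (hx : x ≠ 0) (hy : y ≠ 0) {N : ℕ}
    {a b : ℤ} (ha : |a| ≤ N) (hb : |b| ≤ N) :
    ((y * x)⁻¹) ^ N * MvPolynomial.eval ![x, y] (shiftedMonomial N a b) = x ^ a * y ^ b := by
  have ha' : (((N + a).toNat : ℕ) : ℤ) = N + a :=
    Int.toNat_of_nonneg (by cases abs_le.mp ha; omega)
  have hb' : (((N + b).toNat : ℕ) : ℤ) = N + b :=
    Int.toNat_of_nonneg (by cases abs_le.mp hb; omega)
  simp only [shiftedMonomial, MvPolynomial.eval_mul, MvPolynomial.eval_pow, MvPolynomial.eval_X,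
    Matrix.cons_val_zero, Matrix.cons_val_one]
  rw [← zpow_natCast, ← zpow_natCast x, ← zpow_natCast y, ha', hb', zpow_add₀ hx, zpow_add₀ hy,
    inv_zpow', mul_zpow, zpow_neg, zpow_neg]
  field_simp

theorem exists_sum_eval₂_eq_inv_pow_mul_eval (q : kˣ) (hq : ∀ n : ℕ, n ≠ 0 → q ^ n ≠ 1)
    (D : k[T;T⁻¹]) (hD : D.coeff 0 = 0) :
    ∃ N : ℕ, 0 < N ∧ ∃ b : MvPolynomial (Fin 2) k, ∀ (r : kˣ) (n : ℕ),
      ∑ j ∈ Finset.range n, eval₂ (RingHom.id k) (q ^ (-(j : ℤ)) * r) D =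
        ((↑(q ^ (n + 1)) * (r : k))⁻¹) ^ N * MvPolynomial.eval ![(r : k), ↑(q ^ (n + 1))] b := by
  classical
  set N := D.coeff.support.sup Int.natAbs + 1
  have hN : ∀ s ∈ D.coeff.support, |s| ≤ N := fun s hs => by
    have := Finset.le_sup (f := Int.natAbs) hs
    rw [Int.abs_eq_natAbs]
    omega
  refine ⟨N, by omega, ∑ s ∈ D.coeff.support,
    MvPolynomial.C (D.coeff s * ((q : k) ^ (-s) - 1)⁻¹) *
      (MvPolynomial.C ((q : k) ^ s) * shiftedMonomial N s (-s) - shiftedMonomial N s 0),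
    fun r n => ?_⟩
  have hq' : ∀ n : ℕ, n ≠ 0 → (q : k) ^ n ≠ 1 := fun n hn h =>
    hq n hn (Units.ext (by simpa using h))
  simp only [eval₂_eq_sum, Finsupp.sum, map_sum, Finset.mul_sum]
  rw [Finset.sum_comm]
  refine Finset.sum_congr rfl fun s hs => ?_
  have hs0 : s ≠ 0 := by
    rintro rfl
    exact Finsupp.mem_support_iff.mp hs hD
  have hsN := hN s hs
  simp only [RingHom.id_apply, Units.val_zpow_eq_zpow_val, Units.val_mul,
    Units.val_pow_eq_pow_val, ← Finset.mul_sum, sum_range_zpow_mul_zpow q.ne_zero hq' (r : k) hs0,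
    MvPolynomial.eval_mul, MvPolynomial.eval_sub, MvPolynomial.eval_C]
  have h1 := inv_mul_pow_mul_eval_shiftedMonomial r.ne_zero (pow_ne_zero (n + 1) q.ne_zero) hsN
    (b := -s) (by simpa using hsN)
  have h2 := inv_mul_pow_mul_eval_shiftedMonomial r.ne_zero (pow_ne_zero (n + 1) q.ne_zero) hsN
    (b := 0) (by simp)
  rw [zpow_zero, mul_one] at h2
  linear_combination (-(D.coeff s * ((q : k) ^ (-s) - 1)⁻¹ * (q : k) ^ s)) * h1 +
    (D.coeff s * ((q : k) ^ (-s) - 1)⁻¹) * h2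

end GeometricSum

section WeightedShift
variable {A : Type*} [CommRing A]

noncomputable def weightedShift (d : ℕ → ℕ) (c : ℕ → A) : (ℕ →₀ A) →ₗ[A] (ℕ →₀ A) :=
  Finsupp.lsum A fun n => c n • Finsupp.lsingle (d n)

@[simp] lemma weightedShift_single (d : ℕ → ℕ) (c : ℕ → A) (n : ℕ) (a : A) :
    weightedShift d c (Finsupp.single n a) = Finsupp.single (d n) (c n * a) := by
  simp [weightedShift, Finsupp.smul_single]

end WeightedShift

/- The Verma module of highest weight `t` has basis `vₙ = Fⁿ v₀`, with `K vₙ = q^{-2n} t vₙ`,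
`K⁻¹ vₙ = q^{2n} t⁻¹ vₙ` and `E vₙ = (raiseCoeff n) vₙ₋₁`; here it is modelled on `ℕ →₀ A`
for an arbitrary unit `t` of a commutative `k`-algebra `A`. -/
section VermaRep
variable {k : Type} [Field k] (q : k) {A : Type*} [CommRing A] [Algebra k A] (t : Aˣ)

noncomputable def weightCoeff (n : ℕ) : A := algebraMap k A (q⁻¹ ^ (2 * n)) * t

noncomputable def weightCoeffInv (n : ℕ) : A := algebraMap k A (q ^ (2 * n)) * ↑t⁻¹

noncomputable def raiseCoeff (n : ℕ) : A :=
  ∑ i ∈ Finset.range n,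
    algebraMap k A (q - q⁻¹)⁻¹ * (weightCoeff q t i - weightCoeffInv q t i)

@[simp] lemma raiseCoeff_zero : raiseCoeff q t 0 = 0 := Finset.sum_range_zero _

lemma raiseCoeff_succ (n : ℕ) : raiseCoeff q t (n + 1) =
    raiseCoeff q t n + algebraMap k A (q - q⁻¹)⁻¹ * (weightCoeff q t n - weightCoeffInv q t n) :=
  Finset.sum_range_succ _ _

lemma weightCoeff_succ (n : ℕ) :
    weightCoeff q t (n + 1) = algebraMap k A (q⁻¹ ^ 2) * weightCoeff q t n := by
  rw [weightCoeff, weightCoeff, ← mul_assoc, ← map_mul, ← pow_add]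
  ring_nf

noncomputable def vermaGen : GenU → Module.End k (ℕ →₀ A)
  | GenU.E => (weightedShift (· - 1) (raiseCoeff q t)).restrictScalars k
  | GenU.F => (weightedShift (· + 1) 1).restrictScalars k
  | GenU.K => (weightedShift id (weightCoeff q t)).restrictScalars k
  | GenU.K' => (weightedShift id (weightCoeffInv q t)).restrictScalars k

variable {q}

lemma weightCoeff_mul_weightCoeffInv (hq0 : q ≠ 0) (n : ℕ) :
    weightCoeff q t n * weightCoeffInv q t n = 1 := by
  rw [weightCoeff, weightCoeffInv, mul_mul_mul_comm, ← map_mul, Units.mul_inv, mul_one, inv_pow,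
    inv_mul_cancel₀ (pow_ne_zero _ hq0), map_one]

lemma vermaGen_rel (hq0 : q ≠ 0) ⦃x y : FreeAlgebra k GenU⦄ (h : UqRel k q x y) :
    FreeAlgebra.lift k (vermaGen q t) x = FreeAlgebra.lift k (vermaGen q t) y := by
  cases h <;>
    refine Finsupp.lhom_ext fun n a => ?_ <;>
    simp only [map_mul, map_sub, map_one, FreeAlgebra.lift_ι_apply, AlgHom.commutes, vermaGen,
      Module.End.mul_apply, LinearMap.sub_apply, LinearMap.coe_restrictScalars,
      Module.algebraMap_end_apply, weightedShift_single, Module.End.one_apply, Finsupp.smul_single,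
      Algebra.smul_def, id, Pi.one_apply, one_mul]
  case KK' => rw [← mul_assoc, weightCoeff_mul_weightCoeffInv t hq0, one_mul]
  case K'K =>
    rw [← mul_assoc, mul_comm (weightCoeffInv q t n), weightCoeff_mul_weightCoeffInv t hq0, one_mul]
  case KE =>
    cases n with
    | zero => simp
    | succ n =>
      have h : algebraMap k A (q ^ 2) * algebraMap k A (q⁻¹ ^ 2) = 1 := by
        rw [← map_mul, inv_pow, mul_inv_cancel₀ (pow_ne_zero _ hq0), map_one]
      rw [Nat.add_sub_cancel, weightCoeff_succ]
      congr 1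
      linear_combination (-(weightCoeff q t n * raiseCoeff q t (n + 1) * a)) * h
  case KF =>
    rw [weightCoeff_succ]
    ring_nf
  case EF =>
    have hFE : Finsupp.single (n - 1 + 1) (raiseCoeff q t n * a) =
        Finsupp.single n (raiseCoeff q t n * a) := by
      cases n <;> simp
    rw [Nat.add_sub_cancel, hFE, ← Finsupp.single_sub, ← Finsupp.single_sub, raiseCoeff_succ]
    congr 1
    ring

noncomputable def vermaRep (hq0 : q ≠ 0) : Uq k q →ₐ[k] Module.End k (ℕ →₀ A) :=
  RingQuot.liftAlgHom k ⟨FreeAlgebra.lift k (vermaGen q t), vermaGen_rel t hq0⟩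

variable (hq0 : q ≠ 0)

lemma vermaRep_mk (x : FreeAlgebra k GenU) :
    vermaRep t hq0 (RingQuot.mkAlgHom k (UqRel k q) x) = FreeAlgebra.lift k (vermaGen q t) x :=
  RingQuot.liftAlgHom_mkAlgHom_apply _ _ _ _

lemma vermaRep_uE_single (n : ℕ) (a : A) :
    vermaRep t hq0 (uE k q) (Finsupp.single n a) =
      Finsupp.single (n - 1) (raiseCoeff q t n * a) := by
  simp [uE, vermaRep_mk, vermaGen]

lemma vermaRep_uK_single (n : ℕ) (a : A) :
    vermaRep t hq0 (uK k q) (Finsupp.single n a) = Finsupp.single n (weightCoeff q t n * a) := by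
  simp [uK, vermaRep_mk, vermaGen]

lemma vermaRep_uF_pow_single (n : ℕ) (a : A) :
    vermaRep t hq0 (uF k q ^ n) (Finsupp.single 0 a) = Finsupp.single n a := by
  induction n with
  | zero => simp
  | succ n ih =>
    rw [pow_succ', map_mul, Module.End.mul_apply, ih]
    simp [uF, vermaRep_mk, vermaGen]

section BaseChange
variable {B : Type*} [CommRing B] [Algebra k B] (f : A →ₐ[k] B)

lemma map_weightCoeff (n : ℕ) :
    f (weightCoeff q t n) = weightCoeff q (Units.map (f : A →* B) t) n := by
  simp [weightCoeff]

lemma map_weightCoeffInv (n : ℕ) :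
    f (weightCoeffInv q t n) = weightCoeffInv q (Units.map (f : A →* B) t) n := by
  simp [weightCoeffInv, Units.coe_map_inv]

lemma map_raiseCoeff (n : ℕ) :
    f (raiseCoeff q t n) = raiseCoeff q (Units.map (f : A →* B) t) n := by
  simp [raiseCoeff, map_weightCoeff, map_weightCoeffInv]

lemma map_vermaRep_apply (w : Uq k q) (y : ℕ →₀ A) :
    Finsupp.mapRange.linearMap f.toLinearMap (vermaRep t hq0 w y) =
      vermaRep (Units.map (f : A →* B) t) hq0 w (Finsupp.mapRange.linearMap f.toLinearMap y) := by
  obtain ⟨x, rfl⟩ := RingQuot.mkAlgHom_surjective k (UqRel k q) w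
  induction x using FreeAlgebra.induction generalizing y with
  | grade0 r => simp
  | grade1 g =>
    rw [vermaRep_mk, vermaRep_mk, FreeAlgebra.lift_ι_apply, FreeAlgebra.lift_ι_apply]
    induction y using Finsupp.induction_linear with
    | zero => simp
    | add y z hy hz => simp only [map_add, hy, hz]
    | single n a =>
      cases g <;> simp only [vermaGen, LinearMap.coe_restrictScalars, weightedShift_single,
        Finsupp.mapRange.linearMap_apply, Finsupp.mapRange_single, AlgHom.toLinearMap_apply,
        map_mul, map_raiseCoeff, map_weightCoeff, map_weightCoeffInv, Pi.one_apply, map_one]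
  | mul a b ha hb => simp only [map_mul, Module.End.mul_apply, hb, ha]
  | add a b ha hb => simp only [map_add, LinearMap.add_apply, ha, hb]

end BaseChange

end VermaRep

section CentralCharacter
variable {k : Type} [Field k] {q : k}

lemma apply_eq_smul_of_sub_mem_vermaIdealC {M : Type*} [AddCommGroup M] [Module k M]
    (ρ : Uq k q →ₐ[k] Module.End k M) {v : M} {τ c : k} (hE : ρ (uE k q) v = 0)
    (hK : ρ (uK k q) v = τ • v) {w : Uq k q}
    (hw : w - algebraMap k (Uq k q) c ∈ vermaIdealC k q τ) : ρ w v = c • v := by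
  obtain ⟨a, b, hab⟩ := Submodule.mem_span_pair.mp hw
  have h := congrArg (fun z => ρ z v) hab
  simp only [smul_eq_mul, map_add, map_mul, map_sub, AlgHom.commutes, LinearMap.add_apply,
    Module.End.mul_apply, LinearMap.sub_apply, Module.algebraMap_end_apply, hE, hK, sub_self,
    map_zero, add_zero] at h
  exact sub_eq_zero.mp h.symm

lemma raiseCoeff_succ_eq_zero (hq0 : q ≠ 0) (t : kˣ) {n : ℕ} (ht : (t : k) = q ^ n) :
    raiseCoeff q t (n + 1) = 0 := by
  have hreflect : ∀ i ∈ Finset.range (n + 1),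
      weightCoeff q t (n + 1 - 1 - i) = weightCoeffInv q t i := by
    intro i hi
    have hin : i ≤ n := Finset.mem_range_succ_iff.mp hi
    simp only [weightCoeff, weightCoeffInv, Algebra.algebraMap_self_apply,
      Units.val_inv_eq_inv_val, ht, Nat.add_sub_cancel, inv_pow]
    simp only [← zpow_natCast, ← zpow_neg, ← zpow_add₀ hq0]
    congr 1
    push_cast [Nat.cast_sub hin]
    ring
  rw [raiseCoeff, ← Finset.mul_sum, Finset.sum_sub_distrib, ← Finset.sum_range_reflect,
    Finset.sum_congr rfl hreflect, sub_self, mul_zero]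

lemma vermaRep_uC_single_zero (hq0 : q ≠ 0) (C : FreeAlgebra k GenU) {c₀ : k → k}
    (hmem : ∀ t, uC k q C - algebraMap k (Uq k q) (c₀ t) ∈ vermaIdealC k q t) (t : kˣ) :
    vermaRep t hq0 (uC k q C) (Finsupp.single 0 1) = c₀ t • Finsupp.single 0 1 :=
  apply_eq_smul_of_sub_mem_vermaIdealC _ (by simp [vermaRep_uE_single])
    (by simp [vermaRep_uK_single, weightCoeff]) (hmem t)

lemma exists_laurent_eval₂_eq (hq0 : q ≠ 0) (C : FreeAlgebra k GenU) {c₀ : k → k}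
    (hmem : ∀ t, uC k q C - algebraMap k (Uq k q) (c₀ t) ∈ vermaIdealC k q t) :
    ∃ L : k[T;T⁻¹], ∀ x : kˣ, c₀ x = eval₂ (RingHom.id k) x L := by
  let T₁ : (k[T;T⁻¹])ˣ := ⟨T 1, T (-1), by rw [← T_add, add_neg_cancel, T_zero],
    by rw [← T_add, neg_add_cancel, T_zero]⟩
  refine ⟨vermaRep T₁ hq0 (uC k q C) (Finsupp.single 0 1) 0, fun x => ?_⟩
  have hT : Units.map (laurentEvalAlgHom x : k[T;T⁻¹] →* k) T₁ = x :=
    Units.ext (by simp [T₁, laurentEvalAlgHom])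
  have h := map_vermaRep_apply T₁ hq0 (laurentEvalAlgHom x) (uC k q C) (Finsupp.single 0 1)
  simp only [hT, Finsupp.mapRange.linearMap_apply, Finsupp.mapRange_single,
    AlgHom.toLinearMap_apply, map_one, vermaRep_uC_single_zero hq0 C hmem] at h
  simpa [laurentEvalAlgHom] using (congrArg (· 0) h).symm

lemma centralChar_pow_eq_inv_pow (hq0 : q ≠ 0) (C : FreeAlgebra k GenU) {c₀ : k → k}
    (hmem : ∀ t, uC k q C - algebraMap k (Uq k q) (c₀ t) ∈ vermaIdealC k q t)
    (hC : uC k q C ∈ Subalgebra.center k (Uq k q)) (n : ℕ) :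
    c₀ (q ^ n) = c₀ ((q ^ (n + 2))⁻¹) := by
  set t : kˣ := Units.mk0 q hq0 ^ n
  have ht : (t : k) = q ^ n := by simp [t]
  have hweight : weightCoeff q t (n + 1) = (q ^ (n + 2))⁻¹ := by
    rw [weightCoeff, ht, Algebra.algebraMap_self_apply, inv_pow,
      show 2 * (n + 1) = n + (n + 2) by ring, pow_add]
    field_simp
  have hsingular : vermaRep t hq0 (uC k q C) (Finsupp.single (n + 1) 1) =
      c₀ ((q ^ (n + 2))⁻¹) • Finsupp.single (n + 1) 1 :=
    apply_eq_smul_of_sub_mem_vermaIdealC _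
      (by rw [vermaRep_uE_single, raiseCoeff_succ_eq_zero hq0 t ht, zero_mul, Finsupp.single_zero])
      (by rw [vermaRep_uK_single, hweight, Finsupp.smul_single_one, mul_one]) (hmem _)
  have hcomm : uF k q ^ (n + 1) * uC k q C = uC k q C * uF k q ^ (n + 1) :=
    Subalgebra.mem_center_iff.mp hC _
  have h := congrArg (fun z => vermaRep t hq0 z (Finsupp.single 0 1)) hcomm
  simp only [map_mul, Module.End.mul_apply, vermaRep_uC_single_zero hq0 C hmem, map_smul,
    vermaRep_uF_pow_single, hsingular, ht] at h
  simpa using congrArg (· (n + 1)) h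

end CentralCharacter

section Bracket
variable {k : Type} [Field k] (q : k)

noncomputable def qBracketShift : k[T;T⁻¹] :=
  LaurentPolynomial.C (q / (q - q⁻¹)) * T 1 - LaurentPolynomial.C (q⁻¹ / (q - q⁻¹)) * T (-1)

lemma eval₂_qBracketShift (x : kˣ) :
    eval₂ (RingHom.id k) x (qBracketShift q) = br k q (q * x) := by
  simp only [qBracketShift, br, map_sub, eval₂_C_mul_T, RingHom.id_apply, zpow_one, zpow_neg,
    Units.val_inv_eq_inv_val, mul_inv_rev]
  ring

lemma coeff_qBracketShift_mul_zero (P : k[T;T⁻¹]) :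
    (qBracketShift q * P).coeff 0 = (q * P.coeff (-1) - q⁻¹ * P.coeff 1) / (q - q⁻¹) := by
  simp only [qBracketShift, sub_mul, ← single_eq_C_mul_T, AddMonoidAlgebra.coeff_sub,
    Finsupp.sub_apply, AddMonoidAlgebra.coeff_single_mul_apply, add_zero, neg_neg]
  ring

lemma alph_succ_eq_sum_eval₂ (hq0 : q ≠ 0) {c₀ : k → k} {L : k[T;T⁻¹]}
    (hL : ∀ x : kˣ, c₀ x = eval₂ (RingHom.id k) x L) (r : kˣ) (n : ℕ) :
    alph k q c₀ r (n + 1) = ∑ j ∈ Finset.range n,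
      eval₂ (RingHom.id k) (Units.mk0 q hq0 ^ (-(j : ℤ)) * r) (qBracketShift q * L) := by
  rw [alph, Nat.add_sub_cancel]
  refine Finset.sum_congr rfl fun j _ => ?_
  rw [map_mul, eval₂_qBracketShift, ← hL]
  simp only [Units.val_mul, Units.val_zpow_eq_zpow_val, Units.val_mk0]
  rw [← mul_assoc, ← zpow_one_add₀ hq0, ← sub_eq_add_neg]

end Bracket

theorem alpha_polynomial_general (k : Type) [Field k] (q : k)
    (hq0 : q ≠ 0)
    (hqru : ∀ n : ℕ, n ≠ 0 → q ^ n ≠ 1)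
    (C : FreeAlgebra k GenU) (hC : uC k q C ∈ Subalgebra.center k (Uq k q))
    (c₀ : k → k)
    (hc₀ : ∀ t : k, uC k q C • hwVecC k q t = algebraMap k (Uq k q) (c₀ t) • hwVecC k q t) :
    ∃ N : ℕ, 0 < N ∧ ∃ b : MvPolynomial (Fin 2) k,
      ∀ r : k, r ≠ 0 → ∀ m : ℕ, 2 ≤ m →
        alph k q c₀ r m = ((q ^ m * r)⁻¹) ^ N * MvPolynomial.eval ![r, q ^ m] b := by
  set u := Units.mk0 q hq0
  have hu : ∀ n : ℕ, n ≠ 0 → u ^ n ≠ 1 := fun n hn h =>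
    hqru n hn (by simpa [u] using congrArg Units.val h)
  have hmem : ∀ t, uC k q C - algebraMap k (Uq k q) (c₀ t) ∈ vermaIdealC k q t := fun t =>
    (Submodule.Quotient.eq _).mp <| by
      simpa [hwVecC, ← Submodule.Quotient.mk_smul, Algebra.algebraMap_eq_smul_one] using hc₀ t
  obtain ⟨L, hL⟩ := exists_laurent_eval₂_eq hq0 C hmem
  have hreflect : ∀ n : ℕ, eval₂ (RingHom.id k) (u ^ n) L =
      eval₂ (RingHom.id k) (u ^ (-2 : ℤ) * (u ^ n)⁻¹) L := fun n => by
    rw [← hL, ← hL]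
    convert centralChar_pow_eq_inv_pow hq0 C hmem hC n using 2 <;>
      simp [u, ← mul_inv, ← pow_add, add_comm]
  have hsym : L.coeff (-1) = L.coeff 1 * q⁻¹ ^ 2 := by
    simpa [u] using coeff_neg_eq_of_eval₂_pow_eq L hu _ hreflect 1
  obtain ⟨N, hN, b, hb⟩ := exists_sum_eval₂_eq_inv_pow_mul_eval u hu (qBracketShift q * L) <| by
    rw [coeff_qBracketShift_mul_zero, hsym]
    field_simp
    ring
  refine ⟨N, hN, b, fun r hr m hm => ?_⟩
  obtain ⟨n, rfl⟩ : ∃ n, m = n + 1 := ⟨m - 1, by omega⟩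
  rw [show r = (Units.mk0 r hr : k) from rfl, alph_succ_eq_sum_eval₂ q hq0 hL, hb]
  simp [u]

/-- `α_{r,m} = (q^m r)^{-N} b(r, q^m)` for a single polynomial `b` in two variables and a
single positive integer `N`, provided `q` is not a root of unity. -/
theorem alpha_polynomial (k : Type) [Field k] (q : k)
    (hchar : (2 : k) ≠ 0) (hq0 : q ≠ 0) (hq2 : q ^ 2 ≠ 1)
    (hqru : ∀ n : ℕ, n ≠ 0 → q ^ n ≠ 1)
    (C : FreeAlgebra k GenU) (hC : uC k q C ∈ Subalgebra.center k (Uq k q))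
    (c₀ : k → k)
    (hc₀ : ∀ t : k, uC k q C • hwVecC k q t = algebraMap k (Uq k q) (c₀ t) • hwVecC k q t) :
    ∃ N : ℕ, 0 < N ∧ ∃ b : MvPolynomial (Fin 2) k,
      ∀ r : k, r ≠ 0 → ∀ m : ℕ, 2 ≤ m →
        alph k q c₀ r m = ((q ^ m * r)⁻¹) ^ N * MvPolynomial.eval ![r, q ^ m] b :=
  alpha_polynomial_general k q hq0 hqru C hC c₀ hc₀

end QSO
end

section
/- For every r ∈ k^× and all n, m ∈ ℤ_{≥0}, the following identities hold in the Verma module Z(r): [X, F^n Y^m] v_r = −F^n (Σ_{j=0}^{m−1} q^j Y^j C_0 Y^{m−1−j}) v_r − q^{m+n−1} r^{−1} ⟨q^n⟩ F^{n−1} Y^{m+1} v_r, and [E, F^n Y^m] v_r = −F^n (Σ_{j=0}^{m−2} ⟨q^{j+1}⟩ Y^j C_0 Y^{m−2−j}) v_r + ⟨q^n⟩ ⟨q^{1−m−n} r⟩ F^{n−1} Y^m v_r. -/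
open FreeAlgebra DirectSum

set_option maxSynthPendingDepth 3

namespace QSO

variable (k : Type) [Field k] (q : k)

variable (C : FreeAlgebra k GenU)

/-!
A relation `x a = c a x + d` propagates to powers as
`x aᵐ = cᵐ aᵐ x + ∑_{j<m} cʲ aʲ d a^(m-1-j)`. Applied to `X` and `E` against `F` and `Y`,
this rewrites `X Fⁿ Yᵐ` and `E Fⁿ Yᵐ` as combinations of words ending in `X`, `E` or `K^{±1}`.
On a highest weight vector the first two vanish and `K^{±1}` act by scalars, which collect into
geometric sums equal to `qⁿ⁻¹⟨qⁿ⟩` and `q¹⁻ⁿ⟨qⁿ⟩`. The `C₀`-sum of `E Yᵐ v_r` is computed by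
induction on `m`: `E Y = q⁻¹ Y E + X` feeds the `C₀`-sum of `X Yᵐ v_r` into it.
-/
open Finset

section PowerCommutation
variable {k A : Type*} [CommRing k] [Ring A] [Algebra k A]

theorem mul_pow_eq_smul_pow_mul_add_sum {x a d : A} {c : k} (h : x * a = c • (a * x) + d) :
    ∀ m : ℕ, x * a ^ m =
      c ^ m • (a ^ m * x) + ∑ j ∈ range m, c ^ j • (a ^ j * d * a ^ (m - 1 - j))
  | 0 => by simp
  | m + 1 => by
    have shift : ∀ j ∈ range m, c ^ j • (a ^ j * d * a ^ (m - 1 - j)) * a =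
        c ^ j • (a ^ j * d * a ^ (m + 1 - 1 - j)) := fun j hj => by
      rw [smul_mul_assoc, mul_assoc _ _ a, ← pow_succ,
        show m - 1 - j + 1 = m + 1 - 1 - j by have := mem_range.1 hj; omega]
    rw [pow_succ, ← mul_assoc, mul_pow_eq_smul_pow_mul_add_sum h m, add_mul, sum_mul,
      sum_congr rfl shift, sum_range_succ, smul_mul_assoc, mul_assoc, h, add_tsub_cancel_right,
      tsub_self, pow_zero, mul_one]
    simp only [mul_add, smul_add, mul_smul_comm, smul_smul, ← mul_assoc, ← pow_succ]
    abel

theorem mul_pow_eq_smul_pow_mul {x a : A} {c : k} (h : x * a = c • (a * x)) (m : ℕ) :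
    x * a ^ m = c ^ m • (a ^ m * x) := by
  simpa using
    mul_pow_eq_smul_pow_mul_add_sum (x := x) (a := a) (c := c) (d := 0) (by rwa [add_zero]) m

theorem sum_pow_mul_mul_pow_eq {x a : A} {c : k} (h : x * a = c • (a * x)) (n : ℕ) :
    ∑ j ∈ range n, a ^ j * x * a ^ (n - 1 - j) = (∑ j ∈ range n, c ^ j) • (a ^ (n - 1) * x) :=
  calc ∑ j ∈ range n, a ^ j * x * a ^ (n - 1 - j)
      = ∑ j ∈ range n, c ^ (n - 1 - j) • (a ^ (n - 1) * x) := sum_congr rfl fun j hj => by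
        rw [mul_assoc, mul_pow_eq_smul_pow_mul h, mul_smul_comm, ← mul_assoc, ← pow_add,
          show j + (n - 1 - j) = n - 1 by have := mem_range.1 hj; omega]
    _ = _ := by rw [← sum_smul, sum_range_reflect (c ^ ·) n]

end PowerCommutation

theorem mul_eq_inv_smul_of_mul_eq_smul {k A : Type*} [Field k] [Ring A] [Algebra k A]
    {u u' a : A} {c : k} (hc : c ≠ 0) (huu' : u * u' = 1) (hu'u : u' * u = 1)
    (h : u * a = c • (a * u)) : u' * a = c⁻¹ • (a * u') :=
  calc u' * a = u' * (a * u) * u' := by rw [mul_assoc, mul_assoc, huu', mul_one]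
    _ = u' * (c⁻¹ • (u * a)) * u' := by rw [h, smul_smul, inv_mul_cancel₀ hc, one_smul]
    _ = c⁻¹ • (a * u') := by rw [mul_smul_comm, smul_mul_assoc, ← mul_assoc, hu'u, one_mul]

section QNumbers
variable {k : Type} [Field k] {q : k}

theorem ne_zero_of_sub_inv_ne_zero (hq : q - q⁻¹ ≠ 0) : q ≠ 0 := by
  rintro rfl
  simp at hq

theorem br_pow_succ (hq : q - q⁻¹ ≠ 0) (n : ℕ) :
    br k q (q ^ (n + 1)) = q ^ n + q⁻¹ * br k q (q ^ n) := by
  have hq0 := ne_zero_of_sub_inv_ne_zero hq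
  rw [br, br, div_eq_iff hq, add_mul, mul_assoc, div_mul_cancel₀ _ hq]
  field_simp
  ring

theorem mul_geom_sum_sq (hq : q - q⁻¹ ≠ 0) (n : ℕ) :
    q * ∑ j ∈ range n, (q ^ 2) ^ j = q ^ n * br k q (q ^ n) := by
  induction n with
  | zero => simp [br]
  | succ n ih =>
    have hq0 := ne_zero_of_sub_inv_ne_zero hq
    rw [sum_range_succ, mul_add, ih, br_pow_succ hq]
    field_simp
    ring

theorem br_inv_inv_pow (n : ℕ) : br k q⁻¹ (q⁻¹ ^ n) = br k q (q ^ n) := by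
  rw [br, br, inv_inv, inv_pow, inv_inv, ← neg_sub, ← neg_sub q, neg_div_neg_eq]

theorem inv_mul_geom_sum_inv_sq (hq : q - q⁻¹ ≠ 0) (n : ℕ) :
    q⁻¹ * ∑ j ∈ range n, (q⁻¹ ^ 2) ^ j = q⁻¹ ^ n * br k q (q ^ n) := by
  rw [mul_geom_sum_sq (by rwa [inv_inv, ← neg_sub, neg_ne_zero]) n, br_inv_inv_pow]

end QNumbers

section Relations
variable {k : Type} [Field k] {q : k} {C : FreeAlgebra k GenU}

theorem aK_mul_aK' : aK k q C * aK' k q C = 1 := by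
  simpa only [map_mul, map_one, aK, aK'] using
    RingQuot.mkAlgHom_rel k (ARel.KK' (q := q) (Cl := incl k C))

theorem aK'_mul_aK : aK' k q C * aK k q C = 1 := by
  simpa only [map_mul, map_one, aK, aK'] using
    RingQuot.mkAlgHom_rel k (ARel.K'K (q := q) (Cl := incl k C))

theorem aK_mul_aF : aK k q C * aF k q C = q⁻¹ ^ 2 • (aF k q C * aK k q C) := by
  simpa only [map_mul, AlgHom.commutes, Algebra.smul_def, aK, aF] using
    RingQuot.mkAlgHom_rel k (ARel.KF (q := q) (Cl := incl k C))

theorem aK_mul_aY : aK k q C * aY k q C = q⁻¹ • (aY k q C * aK k q C) := by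
  simpa only [map_mul, AlgHom.commutes, Algebra.smul_def, aK, aY] using
    RingQuot.mkAlgHom_rel k (ARel.KY (q := q) (Cl := incl k C))

theorem aE_mul_aF : aE k q C * aF k q C =
    aF k q C * aE k q C + (q - q⁻¹)⁻¹ • (aK k q C - aK' k q C) := by
  rw [← sub_eq_iff_eq_add']
  simpa only [map_mul, map_sub, AlgHom.commutes, Algebra.smul_def, aE, aF, aK, aK'] using
    RingQuot.mkAlgHom_rel k (ARel.EF (q := q) (Cl := incl k C))

theorem aE_mul_aY : aE k q C * aY k q C = q⁻¹ • (aY k q C * aE k q C) + aX k q C := by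
  rw [add_comm]
  simpa only [map_mul, map_add, AlgHom.commutes, Algebra.smul_def, aE, aX, aY] using
    RingQuot.mkAlgHom_rel k (ARel.EY (q := q) (Cl := incl k C))

theorem aX_mul_aF : aX k q C * aF k q C = aF k q C * aX k q C - aY k q C * aK' k q C := by
  rw [eq_sub_iff_add_eq', eq_comm]
  simpa only [map_mul, map_add, aF, aX, aY, aK'] using
    RingQuot.mkAlgHom_rel k (ARel.FX (q := q) (Cl := incl k C))

theorem aF_mul_aY : aF k q C * aY k q C = aY k q C * aF k q C := by
  simpa only [map_mul, aF, aY] using RingQuot.mkAlgHom_rel k (ARel.FY (q := q) (Cl := incl k C))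

theorem aX_mul_aY : aX k q C * aY k q C = q • (aY k q C * aX k q C) - aC k q C := by
  rw [eq_sub_iff_add_eq', ← eq_sub_iff_add_eq, eq_comm]
  simpa only [map_mul, map_sub, AlgHom.commutes, Algebra.smul_def, aX, aY, aC] using
    RingQuot.mkAlgHom_rel k (ARel.YX (q := q) (Cl := incl k C))

theorem aK'_mul_aF (hq0 : q ≠ 0) : aK' k q C * aF k q C = q ^ 2 • (aF k q C * aK' k q C) := by
  simpa using mul_eq_inv_smul_of_mul_eq_smul (pow_ne_zero 2 (inv_ne_zero hq0)) aK_mul_aK'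
    aK'_mul_aK aK_mul_aF

theorem aK'_mul_aY (hq0 : q ≠ 0) : aK' k q C * aY k q C = q • (aY k q C * aK' k q C) := by
  simpa using mul_eq_inv_smul_of_mul_eq_smul (inv_ne_zero hq0) aK_mul_aK' aK'_mul_aK aK_mul_aY

end Relations

section Sums
variable (k : Type) [Field k] (q : k) (C : FreeAlgebra k GenU)

-- The `C₀`-sums in the formulas for `[X, F^n Y^m] v_r` and `[E, F^n Y^m] v_r`.
noncomputable def sumX (m : ℕ) : QSOAlg k q C :=
  ∑ j ∈ range m, algebraMap k (QSOAlg k q C) (q ^ j) * aY k q C ^ j * aC k q C *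
    aY k q C ^ (m - 1 - j)

noncomputable def sumE (m : ℕ) : QSOAlg k q C :=
  ∑ j ∈ range (m - 1), algebraMap k (QSOAlg k q C) (br k q (q ^ (j + 1))) * aY k q C ^ j *
    aC k q C * aY k q C ^ (m - 2 - j)

end Sums

section PowerRelations
variable {k : Type} [Field k] {q : k} {C : FreeAlgebra k GenU}

theorem aX_mul_aY_pow (m : ℕ) :
    aX k q C * aY k q C ^ m = q ^ m • (aY k q C ^ m * aX k q C) - sumX k q C m := by
  rw [mul_pow_eq_smul_pow_mul_add_sum (by rw [aX_mul_aY, sub_eq_add_neg]) m, sumX,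
    sub_eq_add_neg, ← sum_neg_distrib]
  simp only [mul_neg, neg_mul, Algebra.smul_def, mul_assoc]

theorem aK_mul_aY_pow (m : ℕ) :
    aK k q C * aY k q C ^ m = q⁻¹ ^ m • (aY k q C ^ m * aK k q C) :=
  mul_pow_eq_smul_pow_mul aK_mul_aY m

theorem aK'_mul_aY_pow (hq0 : q ≠ 0) (m : ℕ) :
    aK' k q C * aY k q C ^ m = q ^ m • (aY k q C ^ m * aK' k q C) :=
  mul_pow_eq_smul_pow_mul (aK'_mul_aY hq0) m

theorem aX_mul_aF_pow (hq0 : q ≠ 0) (n : ℕ) :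
    aX k q C * aF k q C ^ n = aF k q C ^ n * aX k q C -
      (∑ j ∈ range n, (q ^ 2) ^ j) • (aF k q C ^ (n - 1) * (aY k q C * aK' k q C)) := by
  have hYK' : aY k q C * aK' k q C * aF k q C =
      q ^ 2 • (aF k q C * (aY k q C * aK' k q C)) := by
    rw [mul_assoc, aK'_mul_aF hq0, mul_smul_comm, ← mul_assoc, ← aF_mul_aY, mul_assoc]
  rw [mul_pow_eq_smul_pow_mul_add_sum (c := (1 : k))
      (by rw [one_smul, aX_mul_aF, sub_eq_add_neg]) n, ← sum_pow_mul_mul_pow_eq hYK']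
  simp only [one_pow, one_smul, mul_neg, neg_mul, sum_neg_distrib, sub_eq_add_neg]

theorem aE_mul_aF_pow (hq0 : q ≠ 0) (n : ℕ) :
    aE k q C * aF k q C ^ n = aF k q C ^ n * aE k q C + (q - q⁻¹)⁻¹ •
      ((∑ j ∈ range n, (q⁻¹ ^ 2) ^ j) • (aF k q C ^ (n - 1) * aK k q C) -
        (∑ j ∈ range n, (q ^ 2) ^ j) • (aF k q C ^ (n - 1) * aK' k q C)) := by
  rw [mul_pow_eq_smul_pow_mul_add_sum (c := (1 : k)) (by rw [one_smul, aE_mul_aF]) n,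
    ← sum_pow_mul_mul_pow_eq aK_mul_aF, ← sum_pow_mul_mul_pow_eq (aK'_mul_aF hq0)]
  simp only [one_pow, one_smul, mul_smul_comm, smul_mul_assoc, mul_sub, sub_mul, ← smul_sum,
    sum_sub_distrib]

theorem sumE_succ (hq : q - q⁻¹ ≠ 0) (m : ℕ) :
    sumE k q C (m + 1) = sumX k q C m + q⁻¹ • (aY k q C * sumE k q C m) := by
  rcases m with _ | m
  · simp [sumE, sumX]
  rw [sumE, sumE, sumX]
  simp only [Nat.add_sub_cancel]
  rw [sum_range_succ', sum_range_succ' _ m, mul_sum, smul_sum,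
    add_right_comm _ _ (∑ i ∈ range m, q⁻¹ • _), ← sum_add_distrib]
  congr 1
  -- after splitting off `j = 0`, the coefficients match by `⟨q^(i+2)⟩ = q^(i+1) + q⁻¹⟨q^(i+1)⟩`
  · refine sum_congr rfl fun i hi => ?_
    obtain ⟨e, he₁, he₂, he₃⟩ : ∃ e, m + 1 + 1 - 2 - (i + 1) = e ∧ m - (i + 1) = e ∧
        m + 1 - 2 - i = e := ⟨_, rfl, by omega, by omega⟩
    have hY : aY k q C * (algebraMap k _ (br k q (q ^ (i + 1))) * aY k q C ^ i * aC k q C *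
        aY k q C ^ e) = algebraMap k _ (br k q (q ^ (i + 1))) * aY k q C ^ (i + 1) * aC k q C *
        aY k q C ^ e := by
      rw [← mul_assoc, ← mul_assoc, ← mul_assoc, ← Algebra.commutes, mul_assoc _ (aY k q C),
        ← pow_succ']
    have hA : ∀ c : k, algebraMap k _ c * aY k q C ^ (i + 1) * aC k q C * aY k q C ^ e =
        c • (aY k q C ^ (i + 1) * aC k q C * aY k q C ^ e) := fun c => by
      rw [Algebra.smul_def, mul_assoc, mul_assoc, mul_assoc]
    rw [he₁, he₂, he₃, hY, hA, hA, hA, br_pow_succ hq, add_smul, smul_smul]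
  · simp [br, div_self hq]

end PowerRelations

section HighestWeight
variable {k : Type} [Field k] {q : k} {C : FreeAlgebra k GenU}
  {M : Type*} [AddCommGroup M] [Module (QSOAlg k q C) M] [Module k M]
  [IsScalarTower k (QSOAlg k q C) M]

variable (k q C) in
structure IsHighestWeight (r : k) (v : M) : Prop where
  aE_smul : aE k q C • v = 0
  aX_smul : aX k q C • v = 0
  aK_smul : aK k q C • v = r • v

theorem hwVec_isHighestWeight (r : k) : IsHighestWeight k q C r (hwVec k q C r) where
  aE_smul := by
    rw [hwVec, ← Submodule.Quotient.mk_smul, smul_eq_mul, mul_one, Submodule.Quotient.mk_eq_zero]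
    exact Submodule.subset_span (by simp)
  aX_smul := by
    rw [hwVec, ← Submodule.Quotient.mk_smul, smul_eq_mul, mul_one, Submodule.Quotient.mk_eq_zero]
    exact Submodule.subset_span (by simp)
  aK_smul := by
    rw [hwVec, ← Submodule.Quotient.mk_smul, ← Submodule.Quotient.mk_smul, smul_eq_mul, mul_one,
      Submodule.Quotient.eq, Algebra.smul_def, mul_one]
    exact Submodule.subset_span (by simp)

namespace IsHighestWeight
variable {r : k} {v : M} (hv : IsHighestWeight k q C r v)
include hv

theorem aK'_smul : aK' k q C • v = r⁻¹ • v := by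
  have hv_eq : v = r • aK' k q C • v := by
    rw [← smul_comm, ← hv.aK_smul, ← mul_smul, aK'_mul_aK, one_smul]
  rcases eq_or_ne r 0 with rfl | hr
  · rw [zero_smul] at hv_eq
    rw [hv_eq, smul_zero, smul_zero]
  · conv_rhs => rw [hv_eq, smul_smul, inv_mul_cancel₀ hr, one_smul]

theorem aK_smul_aY_pow_smul (m : ℕ) :
    aK k q C • aY k q C ^ m • v = (q⁻¹ ^ m * r) • aY k q C ^ m • v := by
  rw [← mul_smul, aK_mul_aY_pow, smul_assoc, mul_smul, hv.aK_smul, smul_comm (aY k q C ^ m) r,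
    smul_smul]

theorem aK'_smul_aY_pow_smul (hq0 : q ≠ 0) (m : ℕ) :
    aK' k q C • aY k q C ^ m • v = (q ^ m * r⁻¹) • aY k q C ^ m • v := by
  rw [← mul_smul, aK'_mul_aY_pow hq0, smul_assoc, mul_smul, hv.aK'_smul,
    smul_comm (aY k q C ^ m) r⁻¹, smul_smul]

theorem aX_smul_aY_pow_smul (m : ℕ) : aX k q C • aY k q C ^ m • v = -(sumX k q C m • v) := by
  rw [← mul_smul, aX_mul_aY_pow, sub_smul, smul_assoc, mul_smul, hv.aX_smul, smul_zero,
    smul_zero, zero_sub]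

theorem aE_smul_aY_pow_smul (hq : q - q⁻¹ ≠ 0) :
    ∀ m : ℕ, aE k q C • aY k q C ^ m • v = -(sumE k q C m • v)
  | 0 => by simp [hv.aE_smul, sumE]
  | m + 1 => by
    rw [pow_succ', mul_smul, ← mul_smul (aE k q C), aE_mul_aY, add_smul, smul_assoc, mul_smul,
      aE_smul_aY_pow_smul hq m, hv.aX_smul_aY_pow_smul, sumE_succ hq, add_smul, smul_assoc,
      mul_smul]
    simp only [smul_neg, neg_add_rev]


theorem commutator_aX_smul (hq : q - q⁻¹ ≠ 0) (n m : ℕ) :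
    (aX k q C * (aF k q C ^ n * aY k q C ^ m) - (aF k q C ^ n * aY k q C ^ m) * aX k q C) • v =
      -((aF k q C ^ n * sumX k q C m) • v) -
        (algebraMap k (QSOAlg k q C) (q ^ ((m : ℤ) + (n : ℤ) - 1) * r⁻¹ * br k q (q ^ n)) *
          (aF k q C ^ (n - 1) * aY k q C ^ (m + 1))) • v := by
  have hq0 := ne_zero_of_sub_inv_ne_zero hq
  have hcoef : (∑ j ∈ range n, (q ^ 2) ^ j) * (q ^ m * r⁻¹) =
      q ^ ((m : ℤ) + n - 1) * r⁻¹ * br k q (q ^ n) := by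
    rw [← inv_mul_cancel_left₀ hq0 (∑ j ∈ range n, _), mul_geom_sum_sq hq, zpow_sub₀ hq0,
      zpow_add₀ hq0, zpow_natCast, zpow_natCast, zpow_one]
    ring
  calc _ = (aX k q C * aF k q C ^ n) • aY k q C ^ m • v := by
        rw [sub_smul, mul_smul _ (aX k q C), hv.aX_smul, smul_zero, sub_zero, ← mul_assoc,
          mul_smul]
    _ = aF k q C ^ n • aX k q C • aY k q C ^ m • v - (∑ j ∈ range n, (q ^ 2) ^ j) •
          aF k q C ^ (n - 1) • aY k q C • aK' k q C • aY k q C ^ m • v := by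
        simp only [aX_mul_aF_pow hq0, sub_smul, smul_assoc, mul_smul]
    _ = -(aF k q C ^ n • sumX k q C m • v) - ((∑ j ∈ range n, (q ^ 2) ^ j) * (q ^ m * r⁻¹)) •
          aF k q C ^ (n - 1) • aY k q C • aY k q C ^ m • v := by
        rw [hv.aX_smul_aY_pow_smul, hv.aK'_smul_aY_pow_smul hq0, smul_neg, smul_comm (aY k q C),
          smul_comm (aF k q C ^ (n - 1)), smul_smul (∑ j ∈ range n, (q ^ 2) ^ j)]
    _ = _ := by
        rw [hcoef, pow_succ', mul_smul (aF k q C ^ n), mul_smul (algebraMap k _ _),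
          algebraMap_smul, mul_smul (aF k q C ^ (n - 1)), mul_smul (aY k q C)]

theorem commutator_aE_smul (hq : q - q⁻¹ ≠ 0) (n m : ℕ) :
    (aE k q C * (aF k q C ^ n * aY k q C ^ m) - (aF k q C ^ n * aY k q C ^ m) * aE k q C) • v =
      -((aF k q C ^ n * sumE k q C m) • v) +
        (algebraMap k (QSOAlg k q C)
            (br k q (q ^ n) * br k q (q ^ ((1 : ℤ) - (m : ℤ) - (n : ℤ)) * r)) *
          (aF k q C ^ (n - 1) * aY k q C ^ m)) • v := by
  have hq0 := ne_zero_of_sub_inv_ne_zero hq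
  have hcoef : (q - q⁻¹)⁻¹ * ((∑ j ∈ range n, (q⁻¹ ^ 2) ^ j) * (q⁻¹ ^ m * r) -
      (∑ j ∈ range n, (q ^ 2) ^ j) * (q ^ m * r⁻¹)) =
      br k q (q ^ n) * br k q (q ^ ((1 : ℤ) - m - n) * r) := by
    rw [← inv_mul_cancel_left₀ hq0 (∑ j ∈ range n, (q ^ 2) ^ j), mul_geom_sum_sq hq,
      ← inv_mul_cancel_left₀ (inv_ne_zero hq0) (∑ j ∈ range n, _), inv_mul_geom_sum_inv_sq hq,
      zpow_sub₀ hq0, zpow_sub₀ hq0, zpow_natCast, zpow_natCast, zpow_one]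
    simp only [br, inv_pow]
    field_simp
  calc _ = (aE k q C * aF k q C ^ n) • aY k q C ^ m • v := by
        rw [sub_smul, mul_smul _ (aE k q C), hv.aE_smul, smul_zero, sub_zero, ← mul_assoc,
          mul_smul]
    _ = aF k q C ^ n • aE k q C • aY k q C ^ m • v + (q - q⁻¹)⁻¹ •
          ((∑ j ∈ range n, (q⁻¹ ^ 2) ^ j) • aF k q C ^ (n - 1) • aK k q C • aY k q C ^ m • v -
            (∑ j ∈ range n, (q ^ 2) ^ j) • aF k q C ^ (n - 1) • aK' k q C • aY k q C ^ m • v) :=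
        by simp only [aE_mul_aF_pow hq0, add_smul, sub_smul, smul_assoc, mul_smul]
    _ = -(aF k q C ^ n • sumE k q C m • v) + ((q - q⁻¹)⁻¹ *
          ((∑ j ∈ range n, (q⁻¹ ^ 2) ^ j) * (q⁻¹ ^ m * r) -
            (∑ j ∈ range n, (q ^ 2) ^ j) * (q ^ m * r⁻¹))) •
          aF k q C ^ (n - 1) • aY k q C ^ m • v := by
        rw [hv.aE_smul_aY_pow_smul hq, hv.aK_smul_aY_pow_smul, hv.aK'_smul_aY_pow_smul hq0,
          smul_neg, smul_comm (aF k q C ^ (n - 1)) (q⁻¹ ^ m * r),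
          smul_comm (aF k q C ^ (n - 1)) (q ^ m * r⁻¹),
          smul_smul (∑ j ∈ range n, (q⁻¹ ^ 2) ^ j), smul_smul (∑ j ∈ range n, (q ^ 2) ^ j),
          ← sub_smul, smul_smul (q - q⁻¹)⁻¹]
    _ = _ := by
        rw [hcoef, mul_smul (aF k q C ^ n), mul_smul (algebraMap k _ _), algebraMap_smul,
          mul_smul (aF k q C ^ (n - 1))]

end IsHighestWeight
end HighestWeight

theorem commutator_formulas_general (k : Type) [Field k] (q : k)
    (hq0 : q ≠ 0) (hq2 : q ^ 2 ≠ 1)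
    (C : FreeAlgebra k GenU)
    (r : k) (n m : ℕ) :
    (aX k q C * (aF k q C ^ n * aY k q C ^ m) - (aF k q C ^ n * aY k q C ^ m) * aX k q C) •
        hwVec k q C r =
      -((aF k q C ^ n * ∑ j ∈ Finset.range m,
          algebraMap k (QSOAlg k q C) (q ^ j) * aY k q C ^ j * aC k q C *
            aY k q C ^ (m - 1 - j)) • hwVec k q C r) -
        (algebraMap k (QSOAlg k q C) (q ^ ((m : ℤ) + (n : ℤ) - 1) * r⁻¹ * br k q (q ^ n)) *
          (aF k q C ^ (n - 1) * aY k q C ^ (m + 1))) • hwVec k q C r ∧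
    (aE k q C * (aF k q C ^ n * aY k q C ^ m) - (aF k q C ^ n * aY k q C ^ m) * aE k q C) •
        hwVec k q C r =
      -((aF k q C ^ n * ∑ j ∈ Finset.range (m - 1),
          algebraMap k (QSOAlg k q C) (br k q (q ^ (j + 1))) * aY k q C ^ j * aC k q C *
            aY k q C ^ (m - 2 - j)) • hwVec k q C r) +
        (algebraMap k (QSOAlg k q C)
            (br k q (q ^ n) * br k q (q ^ ((1 : ℤ) - (m : ℤ) - (n : ℤ)) * r)) *
          (aF k q C ^ (n - 1) * aY k q C ^ m)) • hwVec k q C r := by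
  have hq : q - q⁻¹ ≠ 0 := sub_ne_zero.mpr fun h => hq2 (by
    rw [sq]; nth_rewrite 2 [h]; exact mul_inv_cancel₀ hq0)
  exact ⟨(hwVec_isHighestWeight r).commutator_aX_smul hq n m,
    (hwVec_isHighestWeight r).commutator_aE_smul hq n m⟩

/-- The commutation formulas for `[X, F^n Y^m]` and `[E, F^n Y^m]` applied to the highest
weight vector of the Verma module `Z(r)`. -/
theorem commutator_formulas (k : Type) [Field k] (q : k)
    (hchar : (2 : k) ≠ 0) (hq0 : q ≠ 0) (hq2 : q ^ 2 ≠ 1)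
    (C : FreeAlgebra k GenU) (hC : uC k q C ∈ Subalgebra.center k (Uq k q))
    (r : k) (hr : r ≠ 0) (n m : ℕ) :
    (aX k q C * (aF k q C ^ n * aY k q C ^ m) - (aF k q C ^ n * aY k q C ^ m) * aX k q C) •
        hwVec k q C r =
      -((aF k q C ^ n * ∑ j ∈ Finset.range m,
          algebraMap k (QSOAlg k q C) (q ^ j) * aY k q C ^ j * aC k q C *
            aY k q C ^ (m - 1 - j)) • hwVec k q C r) -
        (algebraMap k (QSOAlg k q C) (q ^ ((m : ℤ) + (n : ℤ) - 1) * r⁻¹ * br k q (q ^ n)) *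
          (aF k q C ^ (n - 1) * aY k q C ^ (m + 1))) • hwVec k q C r ∧
    (aE k q C * (aF k q C ^ n * aY k q C ^ m) - (aF k q C ^ n * aY k q C ^ m) * aE k q C) •
        hwVec k q C r =
      -((aF k q C ^ n * ∑ j ∈ Finset.range (m - 1),
          algebraMap k (QSOAlg k q C) (br k q (q ^ (j + 1))) * aY k q C ^ j * aC k q C *
            aY k q C ^ (m - 2 - j)) • hwVec k q C r) +
        (algebraMap k (QSOAlg k q C)
            (br k q (q ^ n) * br k q (q ^ ((1 : ℤ) - (m : ℤ) - (n : ℤ)) * r)) *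
          (aF k q C ^ (n - 1) * aY k q C ^ m)) • hwVec k q C r :=
  commutator_formulas_general k q hq0 hq2 C r n m

end QSO
end
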